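/- Minimization form of QFI loss: F(ρ_θ) − F(𝒩(ρ_θ)) = min over all self-adjoint operators Q on the output space of ∑_j ‖(Q E_j − E_j L_θ)√ρ_θ‖²_HS, and the minimum is attained at Q = 𝓛_θ. -/

import Mathlib

/-!
Write `σ = 𝒩(ρ) = ∑ⱼ Eⱼ ρ Eⱼᴴ`. Expanding the squares, using `tr 𝒩(X) = tr X` and the SLD
equation `𝒩(Lρ + ρL) = 𝓛σ + σ𝓛` to collect the cross terms gives, for every Hermitian `Q`,
`∑ⱼ ‖(Q Eⱼ - Eⱼ L)√ρ‖²_HS = tr(ρL²) - tr(σ𝓛²) + tr((Q - 𝓛) σ (Q - 𝓛)ᴴ)`.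
This completes the square in `Q`: the last term is nonnegative since `σ ≥ 0`, and vanishes at
`Q = 𝓛`.
-/

open Matrix
open scoped ComplexOrder

/-- The positive semidefinite square root of a positive semidefinite matrix
(definition of `Matrix.PosSemidef.sqrt` from the older Mathlib, since removed). -/
noncomputable def Matrix.PosSemidef.sqrt {n : Type*} [Fintype n] [DecidableEq n]
    {𝕜 : Type*} [RCLike 𝕜] {A : Matrix n n 𝕜} (hA : A.PosSemidef) : Matrix n n 𝕜 :=
  hA.1.eigenvectorUnitary.1 * diagonal ((↑) ∘ (√·) ∘ hA.1.eigenvalues) *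
  (star hA.1.eigenvectorUnitary : Matrix n n 𝕜)

namespace Matrix

section Sqrt

variable {n 𝕜 : Type*} [Fintype n] [DecidableEq n] [RCLike 𝕜] {A : Matrix n n 𝕜}

lemma PosSemidef.sqrt_mul_conjTranspose_self (hA : A.PosSemidef) :
    hA.sqrt * hA.sqrtᴴ = A := by
  set U : Matrix n n 𝕜 := (hA.1.eigenvectorUnitary : Matrix n n 𝕜)
  have hU : Uᴴ * U = 1 := Unitary.coe_star_mul_self hA.1.eigenvectorUnitary
  set D : Matrix n n 𝕜 := diagonal ((↑) ∘ (√·) ∘ hA.1.eigenvalues)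
  have hD : D * Dᴴ = diagonal (((↑) : ℝ → 𝕜) ∘ hA.1.eigenvalues) := by
    rw [diagonal_conjTranspose, diagonal_mul_diagonal]
    congr 1; ext i
    simp [← RCLike.ofReal_mul, Real.mul_self_sqrt (hA.eigenvalues_nonneg i)]
  conv_rhs => rw [hA.1.spectral_theorem, Unitary.conjStarAlgAut_apply]
  simp only [PosSemidef.sqrt, conjTranspose_mul, star_eq_conjTranspose,
    conjTranspose_conjTranspose]
  rw [← hD]
  simp only [Matrix.mul_assoc]
  rw [← Matrix.mul_assoc Uᴴ, hU, Matrix.one_mul]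

end Sqrt

section Trace

variable {m R : Type*} [Fintype m] [CommRing R]

lemma trace_mul_mul_eq_trace_mul_sq [DecidableEq m] (A B : Matrix m m R) :
    (A * B * A).trace = (B * A ^ 2).trace := by
  rw [pow_two, trace_mul_comm B, trace_mul_cycle]

variable [StarRing R]

lemma trace_conjTranspose_mul_self_mul (A S : Matrix m m R) :
    ((A * S)ᴴ * (A * S)).trace = (A * (S * Sᴴ) * Aᴴ).trace := by
  rw [trace_mul_comm, conjTranspose_mul]
  simp only [Matrix.mul_assoc]

lemma trace_sub_mul_mul_conjTranspose_sub {Q L : Matrix m m R} (hQ : Q.IsHermitian)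
    (hL : L.IsHermitian) (E X : Matrix m m R) :
    ((Q * E - E * L) * X * (Q * E - E * L)ᴴ).trace
      = (Q * Q * (E * X * Eᴴ)).trace - (Q * (E * (L * X + X * L) * Eᴴ)).trace
        + (E * (L * X * L) * Eᴴ).trace := by
  have hcyc : (E * L * X * Eᴴ * Q).trace = (Q * (E * L * X * Eᴴ)).trace := trace_mul_comm _ _
  have hcyc' : (Q * E * X * Eᴴ * Q).trace = (Q * Q * (E * X * Eᴴ)).trace := by
    rw [trace_mul_comm]; simp only [Matrix.mul_assoc]
  simp only [conjTranspose_sub, conjTranspose_mul, hQ.eq, hL.eq, sub_mul, mul_sub, mul_add,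
    add_mul, trace_sub, trace_add, Matrix.mul_assoc] at hcyc hcyc' ⊢
  rw [hcyc, hcyc']
  ring

end Trace

section Kraus

variable {m ι R : Type*} [Fintype m] [Fintype ι] [CommRing R] [StarRing R]

def krausMap (E : ι → Matrix m m R) (X : Matrix m m R) : Matrix m m R :=
  ∑ j, E j * X * (E j)ᴴ

lemma PosSemidef.krausMap [PartialOrder R] [AddLeftMono R] {X : Matrix m m R}
    (hX : X.PosSemidef) (E : ι → Matrix m m R) : (krausMap E X).PosSemidef :=
  posSemidef_sum _ fun j _ => hX.mul_mul_conjTranspose_same (E j)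

lemma trace_krausMap [DecidableEq m] {E : ι → Matrix m m R} (hE : ∑ j, (E j)ᴴ * E j = 1)
    (X : Matrix m m R) : (krausMap E X).trace = X.trace := by
  calc (krausMap E X).trace = (∑ j, (E j)ᴴ * E j * X).trace := by
        simp only [krausMap, trace_sum]
        exact Finset.sum_congr rfl fun j _ => by rw [trace_mul_comm, ← Matrix.mul_assoc]
    _ = X.trace := by rw [← Finset.sum_mul, hE, Matrix.one_mul]

lemma sum_trace_sub_mul_mul_conjTranspose_sub [DecidableEq m] {E : ι → Matrix m m R}
    (hE : ∑ j, (E j)ᴴ * E j = 1) {Q L 𝓛 : Matrix m m R} (hQ : Q.IsHermitian)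
    (hL : L.IsHermitian) (h𝓛 : 𝓛.IsHermitian) {X : Matrix m m R}
    (hSLD : krausMap E (L * X + X * L) = 𝓛 * krausMap E X + krausMap E X * 𝓛) :
    ∑ j, ((Q * E j - E j * L) * X * (Q * E j - E j * L)ᴴ).trace
      = (X * L ^ 2).trace - (krausMap E X * 𝓛 ^ 2).trace
        + ((Q - 𝓛) * krausMap E X * (Q - 𝓛)ᴴ).trace := by
  have hsq := trace_sub_mul_mul_conjTranspose_sub hQ h𝓛 1 (krausMap E X)
  simp only [Matrix.mul_one, Matrix.one_mul, conjTranspose_one] at hsq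
  calc ∑ j, ((Q * E j - E j * L) * X * (Q * E j - E j * L)ᴴ).trace
      = (Q * Q * krausMap E X).trace - (Q * krausMap E (L * X + X * L)).trace
          + (krausMap E (L * X * L)).trace := by
        simp only [trace_sub_mul_mul_conjTranspose_sub hQ hL, Finset.sum_add_distrib,
          Finset.sum_sub_distrib, ← trace_sum, ← Finset.mul_sum, krausMap]
    _ = _ := by
        rw [hsq, hSLD, trace_krausMap hE, trace_mul_mul_eq_trace_mul_sq L X,
          trace_mul_mul_eq_trace_mul_sq 𝓛]
        ring

end Kraus

end Matrix

theorem qfi_loss_min_general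
    {n : ℕ} {ι : Type*} [Fintype ι]
    (ρ L 𝓛 : Matrix (Fin n) (Fin n) ℂ) (hρ : ρ.PosSemidef)
    (hL : L.IsHermitian) (h𝓛 : 𝓛.IsHermitian)
    (E : ι → Matrix (Fin n) (Fin n) ℂ)
    (hKraus : ∑ j, (E j)ᴴ * E j = 1)
    (hSLDout : ∑ j, E j * (L * ρ + ρ * L) * (E j)ᴴ
      = 𝓛 * (∑ j, E j * ρ * (E j)ᴴ) + (∑ j, E j * ρ * (E j)ᴴ) * 𝓛) :
    IsLeast
      {x : ℝ | ∃ Q : Matrix (Fin n) (Fin n) ℂ, Q.IsHermitian ∧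
        x = (∑ j, (((Q * E j - E j * L) * hρ.sqrt)ᴴ
              * ((Q * E j - E j * L) * hρ.sqrt)).trace).re}
      ((ρ * L ^ 2).trace.re - ((∑ j, E j * ρ * (E j)ᴴ) * 𝓛 ^ 2).trace.re)
    ∧ (∑ j, (((𝓛 * E j - E j * L) * hρ.sqrt)ᴴ
          * ((𝓛 * E j - E j * L) * hρ.sqrt)).trace).re
        = (ρ * L ^ 2).trace.re - ((∑ j, E j * ρ * (E j)ᴴ) * 𝓛 ^ 2).trace.re := by
  have loss_eq : ∀ Q : Matrix (Fin n) (Fin n) ℂ, Q.IsHermitian →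
      (∑ j, (((Q * E j - E j * L) * hρ.sqrt)ᴴ * ((Q * E j - E j * L) * hρ.sqrt)).trace).re
        = (ρ * L ^ 2).trace.re - (krausMap E ρ * 𝓛 ^ 2).trace.re
          + ((Q - 𝓛) * krausMap E ρ * (Q - 𝓛)ᴴ).trace.re := by
    intro Q hQ
    simp only [trace_conjTranspose_mul_self_mul, hρ.sqrt_mul_conjTranspose_self,
      sum_trace_sub_mul_mul_conjTranspose_sub hKraus hQ hL h𝓛 hSLDout, Complex.add_re,
      Complex.sub_re]
  have attained := loss_eq 𝓛 h𝓛
  simp only [sub_self, Matrix.zero_mul, trace_zero, Complex.zero_re, add_zero] at attained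
  refine ⟨⟨⟨𝓛, h𝓛, attained.symm⟩, ?_⟩, attained⟩
  rintro _ ⟨Q, hQ, rfl⟩
  have hgap := ((hρ.krausMap E).mul_mul_conjTranspose_same (Q - 𝓛)).trace_nonneg
  rw [loss_eq Q hQ]
  exact le_add_of_nonneg_right (Complex.nonneg_iff.mp hgap).1

/-- Minimization form of the QFI loss: `F(ρ) − F(𝒩(ρ))` is the minimum over all
Hermitian `Q` of `∑_j ‖(Q E_j − E_j L)√ρ‖²_HS`, attained at `Q = 𝓛`. -/
theorem qfi_loss_min
    {n : ℕ} {ι : Type*} [Fintype ι]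
    (ρ L 𝓛 : Matrix (Fin n) (Fin n) ℂ) (hρ : ρ.PosSemidef)
    (hρtr : ρ.trace = 1) (hL : L.IsHermitian) (h𝓛 : 𝓛.IsHermitian)
    (E : ι → Matrix (Fin n) (Fin n) ℂ)
    (hKraus : ∑ j, (E j)ᴴ * E j = 1)
    (hSLDout : ∑ j, E j * (L * ρ + ρ * L) * (E j)ᴴ
      = 𝓛 * (∑ j, E j * ρ * (E j)ᴴ) + (∑ j, E j * ρ * (E j)ᴴ) * 𝓛) :
    IsLeast
      {x : ℝ | ∃ Q : Matrix (Fin n) (Fin n) ℂ, Q.IsHermitian ∧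
        x = (∑ j, (((Q * E j - E j * L) * hρ.sqrt)ᴴ
              * ((Q * E j - E j * L) * hρ.sqrt)).trace).re}
      ((ρ * L ^ 2).trace.re - ((∑ j, E j * ρ * (E j)ᴴ) * 𝓛 ^ 2).trace.re)
    ∧ (∑ j, (((𝓛 * E j - E j * L) * hρ.sqrt)ᴴ
          * ((𝓛 * E j - E j * L) * hρ.sqrt)).trace).re
        = (ρ * L ^ 2).trace.re - ((∑ j, E j * ρ * (E j)ᴴ) * 𝓛 ^ 2).trace.re :=
  qfi_loss_min_general ρ L 𝓛 hρ hL h𝓛 E hKraus hSLDout
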